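/- For every fixed λ > 0, η ∈ ℝ and h ∈ ℝ: lim_{ε→0+} ε⁻²·D̃₁(λ,η,εh) = D̄₁(λ,η,h), lim_{ε→0+} ε⁻²·D̃₂(λ,η,εh) = D̄₂(λ,η,h), lim_{ε→0+} ε⁻²·D̃₊(λ,η,εh) = D̄₊(λ,η,h), lim_{ε→0+} ε⁻²·D̃₋(λ,η,εh) = D̄₋(λ,η,h), and consequently lim_{ε→0+} ε⁻⁸·δ̃_ε(λ,η,εh) = det D̄(λ,η,h). -/

import Mathlib

noncomputable section

open Real Matrix Complex

/-- Dispersion relation `ω(k) = 2√α·sin²(πk)`. -/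
def ω (α k : ℝ) : ℝ := 2 * Real.sqrt α * Real.sin (π * k) ^ 2

/-- `R(k) = 2·sin²(πk)·(1 + 2cos²(πk))`. -/
def R (k : ℝ) : ℝ := 2 * Real.sin (π * k) ^ 2 * (1 + 2 * Real.cos (π * k) ^ 2)

/-- `R′(k) = 2π·(sin(2πk) + sin(4πk))`. -/
def R' (k : ℝ) : ℝ := 2 * π * (Real.sin (2 * π * k) + Real.sin (4 * π * k))

/-- `R″(k) = 4π²·(4cos²(2πk) + cos(2πk) − 2)`. -/
def R'' (k : ℝ) : ℝ := 4 * π ^ 2 * (4 * Real.cos (2 * π * k) ^ 2 + Real.cos (2 * π * k) - 2)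

/-- `R_ε = R(k) + ((εη)²/8)·R″(k)`. -/
def Rε (ε η k : ℝ) : ℝ := R k + (ε * η) ^ 2 / 8 * R'' k

/-- `ω̄ = (ω(k + εη/2) + ω(k − εη/2))/2`. -/
def ωbar (α ε η k : ℝ) : ℝ := (ω α (k + ε * η / 2) + ω α (k - ε * η / 2)) / 2

/-- `Δω = ω(k + εη/2) − ω(k − εη/2)`. -/
def Δω (α ε η k : ℝ) : ℝ := ω α (k + ε * η / 2) - ω α (k - ε * η / 2)

/-- `D̃₁ = ε²λ + 2γR_ε + i·Δω`. -/
def D₁ (α γ ε lam η k : ℝ) : ℂ :=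
  (ε ^ 2 * lam + 2 * γ * Rε ε η k : ℝ) + Complex.I * (Δω α ε η k : ℝ)

/-- `D̃₂ = ε²λ + 2γR_ε + 2i·ω̄`. -/
def D₂ (α γ ε lam η k : ℝ) : ℂ :=
  (ε ^ 2 * lam + 2 * γ * Rε ε η k : ℝ) + 2 * Complex.I * (ωbar α ε η k : ℝ)

/-- `D̃₊ = −γR_ε + (γε/2)·R′(k)·η`. -/
def Dplus (γ ε η k : ℝ) : ℝ := -γ * Rε ε η k + γ * ε / 2 * R' k * η

/-- `D̃₋ = −γR_ε − (γε/2)·R′(k)·η`. -/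
def Dminus (γ ε η k : ℝ) : ℝ := -γ * Rε ε η k - γ * ε / 2 * R' k * η

/-- The 4×4 matrix `D̃_ε(λ,η,k)`. -/
def Dmat (α γ ε lam η k : ℝ) : Matrix (Fin 4) (Fin 4) ℂ :=
  !![D₁ α γ ε lam η k, (Dplus γ ε η k : ℂ), (Dminus γ ε η k : ℂ), 0;
     (Dplus γ ε η k : ℂ), D₂ α γ ε lam η k, 0, (Dminus γ ε η k : ℂ);
     (Dminus γ ε η k : ℂ), 0, (starRingEnd ℂ) (D₂ α γ ε lam η k), (Dplus γ ε η k : ℂ);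
     0, (Dminus γ ε η k : ℂ), (Dplus γ ε η k : ℂ), (starRingEnd ℂ) (D₁ α γ ε lam η k)]

/-- `δ̃_ε(λ,η,k) = det D̃_ε(λ,η,k)`. -/
def δdet (α γ ε lam η k : ℝ) : ℂ := (Dmat α γ ε lam η k).det

/-- Limiting symbol `D̄₁(λ,η,h) = λ + 12γπ²(h² + η²/4) + 4√α·π²·i·h·η`. -/
def Dbar₁ (α γ lam η h : ℝ) : ℂ :=
  ((lam + 12 * γ * π ^ 2 * (h ^ 2 + η ^ 2 / 4) : ℝ) : ℂ)
    + ((4 * Real.sqrt α * π ^ 2 * h * η : ℝ) : ℂ) * Complex.I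

/-- Limiting symbol `D̄₂(λ,η,h) = λ + 2π²(h² + η²/4)·(6γ + 2√α·i)`. -/
def Dbar₂ (α γ lam η h : ℝ) : ℂ :=
  (lam : ℂ) + ((2 * π ^ 2 * (h ^ 2 + η ^ 2 / 4) : ℝ) : ℂ) *
    (((6 * γ : ℝ) : ℂ) + ((2 * Real.sqrt α : ℝ) : ℂ) * Complex.I)

/-- Limiting symbol `D̄₊(λ,η,h) = −6γπ²(h − η/2)²`. -/
def DbarPlus (γ η h : ℝ) : ℝ := -6 * γ * π ^ 2 * (h - η / 2) ^ 2

/-- Limiting symbol `D̄₋(λ,η,h) = −6γπ²(h + η/2)²`. -/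
def DbarMinus (γ η h : ℝ) : ℝ := -6 * γ * π ^ 2 * (h + η / 2) ^ 2

/-- The limiting 4×4 matrix `D̄(λ,η,h)`. -/
def DbarMat (α γ lam η h : ℝ) : Matrix (Fin 4) (Fin 4) ℂ :=
  !![Dbar₁ α γ lam η h, (DbarPlus γ η h : ℂ), (DbarMinus γ η h : ℂ), 0;
     (DbarPlus γ η h : ℂ), Dbar₂ α γ lam η h, 0, (DbarMinus γ η h : ℂ);
     (DbarMinus γ η h : ℂ), 0, (starRingEnd ℂ) (Dbar₂ α γ lam η h), (DbarPlus γ η h : ℂ);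
     0, (DbarMinus γ η h : ℂ), (DbarPlus γ η h : ℂ), (starRingEnd ℂ) (Dbar₁ α γ lam η h)]

/-! After the substitution `k = εh` every symbol is a trigonometric expression in `ε` that
vanishes to second order at `0`: `ω` and `R` through `sin²`, while `R′` vanishes to first order
and carries an extra factor `ε`. So each quotient by `ε²` reduces to the derivative limit
`sin (εc) / ε → c`. For the determinant, `ε⁻²` is real, so `ε⁻²·D̃_ε` has the same
conjugation pattern with rescaled entries; homogeneity of the `4 × 4` determinant gives
`ε⁻⁸·δ̃_ε = det (ε⁻²·D̃_ε)`, and continuity of `det` finishes. -/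

open Filter Topology

theorem tendsto_sin_mul_div (c : ℝ) :
    Tendsto (fun ε : ℝ => Real.sin (ε * c) / ε) (𝓝[≠] 0) (𝓝 c) := by
  have hd : HasDerivAt (fun ε : ℝ => Real.sin (ε * c)) c 0 := by
    simpa using (hasDerivAt_mul_const c (x := (0 : ℝ))).sin
  refine hd.tendsto_slope_zero.congr fun ε => ?_
  simp [div_eq_inv_mul]

theorem tendsto_sin_sq_mul_div_sq (c : ℝ) :
    Tendsto (fun ε : ℝ => Real.sin (ε * c) ^ 2 / ε ^ 2) (𝓝[≠] 0) (𝓝 (c ^ 2)) :=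
  ((tendsto_sin_mul_div c).pow 2).congr fun ε => by rw [div_pow]

theorem tendsto_ω_mul_div_sq (α a : ℝ) :
    Tendsto (fun ε : ℝ => ω α (ε * a) / ε ^ 2) (𝓝[≠] 0) (𝓝 (2 * √α * (π * a) ^ 2)) :=
  ((tendsto_sin_sq_mul_div_sq (π * a)).const_mul (2 * √α)).congr fun ε => by
    rw [ω, show π * (ε * a) = ε * (π * a) by ring, mul_div_assoc]

theorem tendsto_R_mul_div_sq (h : ℝ) :
    Tendsto (fun ε : ℝ => R (ε * h) / ε ^ 2) (𝓝[≠] 0) (𝓝 (6 * π ^ 2 * h ^ 2)) := by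
  have hcos : Tendsto (fun ε : ℝ => 1 + 2 * Real.cos (ε * (π * h)) ^ 2) (𝓝[≠] 0) (𝓝 3) := by
    have : Continuous fun ε : ℝ => 1 + 2 * Real.cos (ε * (π * h)) ^ 2 := by fun_prop
    convert (this.tendsto 0).mono_left nhdsWithin_le_nhds using 2
    norm_num
  rw [show 6 * π ^ 2 * h ^ 2 = 2 * (π * h) ^ 2 * 3 by ring]
  refine (((tendsto_sin_sq_mul_div_sq (π * h)).const_mul 2).mul hcos).congr fun ε => ?_
  rw [R, show π * (ε * h) = ε * (π * h) by ring]
  ring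

theorem tendsto_R'_mul_div (h : ℝ) :
    Tendsto (fun ε : ℝ => R' (ε * h) / ε) (𝓝[≠] 0) (𝓝 (12 * π ^ 2 * h)) := by
  rw [show 12 * π ^ 2 * h = 2 * π * (2 * π * h + 4 * π * h) by ring]
  refine (((tendsto_sin_mul_div (2 * π * h)).add (tendsto_sin_mul_div (4 * π * h))).const_mul
    (2 * π)).congr fun ε => ?_
  rw [R', show 2 * π * (ε * h) = ε * (2 * π * h) by ring,
    show 4 * π * (ε * h) = ε * (4 * π * h) by ring]
  ring

theorem tendsto_R''_mul (h : ℝ) :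
    Tendsto (fun ε : ℝ => R'' (ε * h)) (𝓝[≠] 0) (𝓝 (12 * π ^ 2)) := by
  have : Continuous fun ε : ℝ => R'' (ε * h) := by unfold R''; fun_prop
  convert (this.tendsto 0).mono_left nhdsWithin_le_nhds using 2
  norm_num [R'']
  ring

theorem tendsto_Rε_mul_div_sq (η h : ℝ) :
    Tendsto (fun ε : ℝ => Rε ε η (ε * h) / ε ^ 2) (𝓝[≠] 0)
      (𝓝 (6 * π ^ 2 * (h ^ 2 + η ^ 2 / 4))) := by
  rw [show 6 * π ^ 2 * (h ^ 2 + η ^ 2 / 4) = 6 * π ^ 2 * h ^ 2 + η ^ 2 / 8 * (12 * π ^ 2) by ring]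
  refine ((tendsto_R_mul_div_sq h).add ((tendsto_R''_mul h).const_mul (η ^ 2 / 8))).congr' ?_
  filter_upwards [self_mem_nhdsWithin] with ε (hε : ε ≠ 0)
  rw [Rε]
  field_simp

theorem tendsto_Δω_mul_div_sq (α η h : ℝ) :
    Tendsto (fun ε : ℝ => Δω α ε η (ε * h) / ε ^ 2) (𝓝[≠] 0) (𝓝 (4 * √α * π ^ 2 * h * η)) := by
  rw [show 4 * √α * π ^ 2 * h * η
      = 2 * √α * (π * (h + η / 2)) ^ 2 - 2 * √α * (π * (h - η / 2)) ^ 2 by ring]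
  refine ((tendsto_ω_mul_div_sq α _).sub (tendsto_ω_mul_div_sq α _)).congr fun ε => ?_
  rw [Δω, mul_add, mul_sub, sub_div, mul_div_assoc]

theorem tendsto_ωbar_mul_div_sq (α η h : ℝ) :
    Tendsto (fun ε : ℝ => ωbar α ε η (ε * h) / ε ^ 2) (𝓝[≠] 0)
      (𝓝 (2 * √α * π ^ 2 * (h ^ 2 + η ^ 2 / 4))) := by
  rw [show 2 * √α * π ^ 2 * (h ^ 2 + η ^ 2 / 4)
      = (2 * √α * (π * (h + η / 2)) ^ 2 + 2 * √α * (π * (h - η / 2)) ^ 2) / 2 by ring]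
  refine (((tendsto_ω_mul_div_sq α _).add (tendsto_ω_mul_div_sq α _)).div_const 2).congr
    fun ε => ?_
  rw [ωbar, mul_add, mul_sub, mul_div_assoc]
  ring

theorem tendsto_diag_div_sq (γ lam η h : ℝ) :
    Tendsto (fun ε : ℝ => (ε ^ 2 * lam + 2 * γ * Rε ε η (ε * h)) / ε ^ 2) (𝓝[≠] 0)
      (𝓝 (lam + 12 * γ * π ^ 2 * (h ^ 2 + η ^ 2 / 4))) := by
  rw [show lam + 12 * γ * π ^ 2 * (h ^ 2 + η ^ 2 / 4)
      = lam + 2 * γ * (6 * π ^ 2 * (h ^ 2 + η ^ 2 / 4)) by ring]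
  refine (tendsto_const_nhds.add ((tendsto_Rε_mul_div_sq η h).const_mul (2 * γ))).congr' ?_
  filter_upwards [self_mem_nhdsWithin] with ε (hε : ε ≠ 0)
  field_simp

theorem tendsto_Dplus_div_sq (γ η h : ℝ) :
    Tendsto (fun ε : ℝ => Dplus γ ε η (ε * h) / ε ^ 2) (𝓝[≠] 0) (𝓝 (DbarPlus γ η h)) := by
  rw [show DbarPlus γ η h = -γ * (6 * π ^ 2 * (h ^ 2 + η ^ 2 / 4)) + γ / 2 * (12 * π ^ 2 * h) * η
    by rw [DbarPlus]; ring]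
  refine ((tendsto_Rε_mul_div_sq η h).const_mul (-γ)).add
    (((tendsto_R'_mul_div h).const_mul (γ / 2)).mul_const η) |>.congr' ?_
  filter_upwards [self_mem_nhdsWithin] with ε (hε : ε ≠ 0)
  rw [Dplus]
  field_simp

theorem tendsto_Dminus_div_sq (γ η h : ℝ) :
    Tendsto (fun ε : ℝ => Dminus γ ε η (ε * h) / ε ^ 2) (𝓝[≠] 0) (𝓝 (DbarMinus γ η h)) := by
  rw [show DbarMinus γ η h = -γ * (6 * π ^ 2 * (h ^ 2 + η ^ 2 / 4)) - γ / 2 * (12 * π ^ 2 * h) * η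
    by rw [DbarMinus]; ring]
  refine ((tendsto_Rε_mul_div_sq η h).const_mul (-γ)).sub
    (((tendsto_R'_mul_div h).const_mul (γ / 2)).mul_const η) |>.congr' ?_
  filter_upwards [self_mem_nhdsWithin] with ε (hε : ε ≠ 0)
  rw [Dminus]
  field_simp

theorem tendsto_inv_sq_mul_ofReal_add_I_mul {f g : ℝ → ℝ} {l : Filter ℝ} {x y : ℝ}
    (hf : Tendsto (fun ε => f ε / ε ^ 2) l (𝓝 x)) (hg : Tendsto (fun ε => g ε / ε ^ 2) l (𝓝 y)) :
    Tendsto (fun ε : ℝ => 1 / (ε : ℂ) ^ 2 * (f ε + I * g ε)) l (𝓝 (x + I * y)) :=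
  (hf.ofReal.add (hg.ofReal.const_mul I)).congr fun ε => by push_cast; ring

theorem tendsto_D₁_div_sq (α γ lam η h : ℝ) :
    Tendsto (fun ε : ℝ => 1 / (ε : ℂ) ^ 2 * D₁ α γ ε lam η (ε * h)) (𝓝[≠] 0)
      (𝓝 (Dbar₁ α γ lam η h)) := by
  rw [Dbar₁, mul_comm _ I]
  exact tendsto_inv_sq_mul_ofReal_add_I_mul (tendsto_diag_div_sq γ lam η h)
    (tendsto_Δω_mul_div_sq α η h)

theorem tendsto_D₂_div_sq (α γ lam η h : ℝ) :
    Tendsto (fun ε : ℝ => 1 / (ε : ℂ) ^ 2 * D₂ α γ ε lam η (ε * h)) (𝓝[≠] 0)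
      (𝓝 (Dbar₂ α γ lam η h)) := by
  have hD₂ (ε : ℝ) : D₂ α γ ε lam η (ε * h) = ((ε ^ 2 * lam + 2 * γ * Rε ε η (ε * h) : ℝ) : ℂ)
      + I * ((2 * ωbar α ε η (ε * h) : ℝ) : ℂ) := by
    rw [D₂]; push_cast; ring
  have hDbar₂ : Dbar₂ α γ lam η h = ((lam + 12 * γ * π ^ 2 * (h ^ 2 + η ^ 2 / 4) : ℝ) : ℂ)
      + I * ((2 * (2 * √α * π ^ 2 * (h ^ 2 + η ^ 2 / 4)) : ℝ) : ℂ) := by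
    rw [Dbar₂]; push_cast; ring
  simp only [hD₂, hDbar₂]
  exact tendsto_inv_sq_mul_ofReal_add_I_mul (tendsto_diag_div_sq γ lam η h)
    (by simpa only [mul_div_assoc] using (tendsto_ωbar_mul_div_sq α η h).const_mul 2)

/-- `Dmat` and `DbarMat` are definitionally of this form. -/
def symbolMatrix (a b p m : ℂ) : Matrix (Fin 4) (Fin 4) ℂ :=
  !![a, p, m, 0;
     p, b, 0, m;
     m, 0, starRingEnd ℂ b, p;
     0, m, p, starRingEnd ℂ a]

theorem ofReal_smul_symbolMatrix (c : ℝ) (a b p m : ℂ) :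
    (c : ℂ) • symbolMatrix a b p m = symbolMatrix (c * a) (c * b) (c * p) (c * m) := by
  ext i j
  fin_cases i <;> fin_cases j <;> simp [symbolMatrix]

theorem tendsto_symbolMatrix {ι : Type*} {l : Filter ι} {a b p m : ι → ℂ}
    {a₀ b₀ p₀ m₀ : ℂ} (ha : Tendsto a l (𝓝 a₀)) (hb : Tendsto b l (𝓝 b₀))
    (hp : Tendsto p l (𝓝 p₀)) (hm : Tendsto m l (𝓝 m₀)) :
    Tendsto (fun x => symbolMatrix (a x) (b x) (p x) (m x)) l
      (𝓝 (symbolMatrix a₀ b₀ p₀ m₀)) := by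
  refine tendsto_pi_nhds.mpr fun i => tendsto_pi_nhds.mpr fun j => ?_
  fin_cases i <;> fin_cases j <;>
    simp only [symbolMatrix, of_apply, cons_val', cons_val, cons_val_zero, cons_val_one,
      cons_val_fin_one, Fin.zero_eta, Fin.mk_one, Fin.reduceFinMk, Fin.isValue] <;>
    first
      | exact ha | exact hb | exact hp | exact hm | exact ha.star | exact hb.star
      | exact tendsto_const_nhds

theorem inv_pow_eight_mul_det_symbolMatrix (ε : ℝ) (a b : ℂ) (p m : ℝ) :
    1 / (ε : ℂ) ^ 8 * (symbolMatrix a b p m).det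
      = (symbolMatrix (1 / (ε : ℂ) ^ 2 * a) (1 / (ε : ℂ) ^ 2 * b) (p / ε ^ 2 : ℝ)
          (m / ε ^ 2 : ℝ)).det := by
  have hscale := ofReal_smul_symbolMatrix (1 / ε ^ 2) a b p m
  push_cast at hscale ⊢
  rw [div_eq_inv_mul (p : ℂ), div_eq_inv_mul (m : ℂ), ← one_div, ← hscale, det_smul,
    Fintype.card_fin]
  ring

theorem tendsto_inv_pow_eight_mul_det_symbolMatrix {l : Filter ℝ} {a b : ℝ → ℂ} {p m : ℝ → ℝ}
    {a₀ b₀ : ℂ} {p₀ m₀ : ℝ} (ha : Tendsto (fun ε : ℝ => 1 / (ε : ℂ) ^ 2 * a ε) l (𝓝 a₀))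
    (hb : Tendsto (fun ε : ℝ => 1 / (ε : ℂ) ^ 2 * b ε) l (𝓝 b₀))
    (hp : Tendsto (fun ε => p ε / ε ^ 2) l (𝓝 p₀)) (hm : Tendsto (fun ε => m ε / ε ^ 2) l (𝓝 m₀)) :
    Tendsto (fun ε : ℝ => 1 / (ε : ℂ) ^ 8 * (symbolMatrix (a ε) (b ε) (p ε) (m ε)).det) l
      (𝓝 (symbolMatrix a₀ b₀ p₀ m₀).det) := by
  simp only [inv_pow_eight_mul_det_symbolMatrix]
  exact (continuous_id.matrix_det.tendsto _).comp
    (tendsto_symbolMatrix ha hb hp.ofReal hm.ofReal)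

theorem symbols_scaling_limit_general (α γ : ℝ) (lam η h : ℝ) :
    Filter.Tendsto (fun ε : ℝ => (1 / (ε : ℂ) ^ 2) * D₁ α γ ε lam η (ε * h))
      (nhdsWithin 0 (Set.Ioi 0)) (nhds (Dbar₁ α γ lam η h)) ∧
    Filter.Tendsto (fun ε : ℝ => (1 / (ε : ℂ) ^ 2) * D₂ α γ ε lam η (ε * h))
      (nhdsWithin 0 (Set.Ioi 0)) (nhds (Dbar₂ α γ lam η h)) ∧
    Filter.Tendsto (fun ε : ℝ => Dplus γ ε η (ε * h) / ε ^ 2)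
      (nhdsWithin 0 (Set.Ioi 0)) (nhds (DbarPlus γ η h)) ∧
    Filter.Tendsto (fun ε : ℝ => Dminus γ ε η (ε * h) / ε ^ 2)
      (nhdsWithin 0 (Set.Ioi 0)) (nhds (DbarMinus γ η h)) ∧
    Filter.Tendsto (fun ε : ℝ => (1 / (ε : ℂ) ^ 8) * δdet α γ ε lam η (ε * h))
      (nhdsWithin 0 (Set.Ioi 0)) (nhds ((DbarMat α γ lam η h).det)) := by
  have h₁ := tendsto_D₁_div_sq α γ lam η h
  have h₂ := tendsto_D₂_div_sq α γ lam η h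
  have hplus := tendsto_Dplus_div_sq γ η h
  have hminus := tendsto_Dminus_div_sq γ η h
  have hdet : Tendsto (fun ε : ℝ => 1 / (ε : ℂ) ^ 8 * δdet α γ ε lam η (ε * h)) (𝓝[≠] 0)
      (𝓝 (DbarMat α γ lam η h).det) :=
    tendsto_inv_pow_eight_mul_det_symbolMatrix h₁ h₂ hplus hminus
  have hle := nhdsGT_le_nhdsNE (0 : ℝ)
  exact ⟨h₁.mono_left hle, h₂.mono_left hle, hplus.mono_left hle, hminus.mono_left hle,
    hdet.mono_left hle⟩

theorem symbols_scaling_limit (α γ : ℝ) (hα : 0 < α) (hγ : 0 < γ)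
    (lam η h : ℝ) (hlam : 0 < lam) :
    Filter.Tendsto (fun ε : ℝ => (1 / (ε : ℂ) ^ 2) * D₁ α γ ε lam η (ε * h))
      (nhdsWithin 0 (Set.Ioi 0)) (nhds (Dbar₁ α γ lam η h)) ∧
    Filter.Tendsto (fun ε : ℝ => (1 / (ε : ℂ) ^ 2) * D₂ α γ ε lam η (ε * h))
      (nhdsWithin 0 (Set.Ioi 0)) (nhds (Dbar₂ α γ lam η h)) ∧
    Filter.Tendsto (fun ε : ℝ => Dplus γ ε η (ε * h) / ε ^ 2)
      (nhdsWithin 0 (Set.Ioi 0)) (nhds (DbarPlus γ η h)) ∧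
    Filter.Tendsto (fun ε : ℝ => Dminus γ ε η (ε * h) / ε ^ 2)
      (nhdsWithin 0 (Set.Ioi 0)) (nhds (DbarMinus γ η h)) ∧
    Filter.Tendsto (fun ε : ℝ => (1 / (ε : ℂ) ^ 8) * δdet α γ ε lam η (ε * h))
      (nhdsWithin 0 (Set.Ioi 0)) (nhds ((DbarMat α γ lam η h).det)) :=
  symbols_scaling_limit_general α γ lam η h
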